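/- Disappearance of the fundamental solution at the critical exponent: let N ≥ 3, m_c = (N-2)/N, and fix M > 0 and t > 0. For each m ∈ (m_c, 1) let B_m denote the fast diffusion Barenblatt solution whose constant C = C(m) > 0 is chosen so that ∫_{ℝ^N} B_m(x,t) dx = M. Then, as m → m_c from above: (a) for every x ≠ 0, B_m(x,t) → 0; and (b) for every bounded continuous function f : ℝ^N → ℝ, ∫_{ℝ^N} f(x) B_m(x,t) dx → M·f(0); that is, the measures B_m(·,t) dx converge weakly-* to the Dirac mass M·δ₀. -/

import Mathlib

open MeasureTheory Real Filter Topology Set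

noncomputable section

/-- Self-similarity exponent `α = N/(2-N(1-m))` of the fast diffusion Barenblatt solution. -/
def fdeAlpha (N : ℕ) (m : ℝ) : ℝ := N / (2 - N * (1 - m))

/-- Self-similarity exponent `β = 1/(2-N(1-m))` of the fast diffusion Barenblatt solution. -/
def fdeBeta (N : ℕ) (m : ℝ) : ℝ := 1 / (2 - N * (1 - m))

/-- The constant `k = β(1-m)/(2m)`. -/
def fdeK (N : ℕ) (m : ℝ) : ℝ := fdeBeta N m * (1 - m) / (2 * m)

/-- The Barenblatt solution `B(x,t) = t^{-α} (C + k|x|² t^{-2β})^{-1/(1-m)}`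
of the fast diffusion equation `∂_t u = Δ(u^m)`. -/
def fdeBarenblatt (N : ℕ) (m C : ℝ) (x : EuclideanSpace ℝ (Fin N)) (t : ℝ) : ℝ :=
  t ^ (-fdeAlpha N m) *
    (C + fdeK N m * ‖x‖ ^ 2 * t ^ (-(2 * fdeBeta N m))) ^ (-(1 / (1 - m)))

/-!
Write `p = 1/(1-m)`. Dropping `C` gives `B(x,t) ≤ (t/k)^p |x|^(-2p)`. As `m ↓ m_c` we have
`p → N/2` while `k` blows up like `1/(m - m_c)`, so this bound vanishes away from the origin.
Integrated over `|x| ≥ δ` it equals `(t/k)^p c_N δ^(N-2p) / (2p - N)`; since `2p - N` is also of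
order `m - m_c`, this behaves like `(m - m_c)^(p-1)`, which tends to `0` because `N ≥ 3`. So the
whole mass `M` concentrates at the origin, and continuity of `f` at `0` gives `∫ f B → M f(0)`.
-/

open Metric Module

section Radial

lemma indicator_compl_ball_norm_rpow {E : Type*} [SeminormedAddCommGroup E] (δ q : ℝ) :
    (ball (0 : E) δ)ᶜ.indicator (fun x => ‖x‖ ^ (-q)) =
      fun x => (Ici δ).indicator (fun r : ℝ => r ^ (-q)) ‖x‖ := by
  ext x
  by_cases h : δ ≤ ‖x‖ <;> simp [indicator, h]

variable {E : Type*} [NormedAddCommGroup E] [NormedSpace ℝ E] [Nontrivial E]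
  [FiniteDimensional ℝ E] {δ q : ℝ}

lemma eqOn_pow_finrank_sub_one_smul_indicator_rpow :
    EqOn (fun y : ℝ => y ^ (finrank ℝ E - 1) • (Ici δ).indicator (fun r : ℝ => r ^ (-q)) y)
      ((Ici δ).indicator fun y => y ^ ((finrank ℝ E : ℝ) - 1 - q)) (Ioi 0) := by
  intro y (hy : 0 < y)
  by_cases h : δ ≤ y
  · have hd : 1 ≤ finrank ℝ E := finrank_pos
    simp only [indicator, mem_Ici, h, if_true, smul_eq_mul]
    rw [← rpow_natCast, Nat.cast_sub hd, Nat.cast_one, ← rpow_add hy, sub_eq_add_neg (_ - 1)]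
  · simp [indicator, h]

variable [MeasurableSpace E] [BorelSpace E] (μ : Measure E)
  [μ.IsAddHaarMeasure]

lemma integrableOn_compl_ball_norm_rpow_neg (hδ : 0 < δ) (hq : (finrank ℝ E : ℝ) < q) :
    IntegrableOn (fun x : E => ‖x‖ ^ (-q)) (ball 0 δ)ᶜ μ := by
  rw [← integrable_indicator_iff measurableSet_ball.compl, indicator_compl_ball_norm_rpow,
    integrable_fun_norm_addHaar,
    integrableOn_congr_fun eqOn_pow_finrank_sub_one_smul_indicator_rpow measurableSet_Ioi,
    IntegrableOn, integrable_indicator_iff measurableSet_Ici]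
  exact ((integrableOn_Ici_iff_integrableOn_Ioi).mpr
    (integrableOn_Ioi_rpow_of_lt (by linarith) hδ)).restrict

lemma setIntegral_compl_ball_norm_rpow_neg (hδ : 0 < δ) (hq : (finrank ℝ E : ℝ) < q) :
    ∫ x in (ball (0 : E) δ)ᶜ, ‖x‖ ^ (-q) ∂μ =
      finrank ℝ E * μ.real (ball 0 1) *
        (δ ^ ((finrank ℝ E : ℝ) - q) / (q - finrank ℝ E)) := by
  rw [← integral_indicator measurableSet_ball.compl, indicator_compl_ball_norm_rpow,
    integral_fun_norm_addHaar, setIntegral_congr_fun measurableSet_Ioi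
      eqOn_pow_finrank_sub_one_smul_indicator_rpow, setIntegral_indicator measurableSet_Ici,
    inter_eq_self_of_subset_right (Ici_subset_Ioi.2 hδ), integral_Ici_eq_integral_Ioi,
    integral_Ioi_rpow_of_lt (by linarith) hδ, nsmul_eq_mul, smul_eq_mul,
    show (finrank ℝ E : ℝ) - 1 - q + 1 = finrank ℝ E - q by ring, neg_div, ← div_neg, neg_sub,
    mul_assoc]

end Radial

section Concentration

variable {α ι : Type*} [PseudoMetricSpace α] [MeasurableSpace α] [OpensMeasurableSpace α]
  {μ : Measure α} {x₀ : α} {f : α → ℝ} {K : ℝ}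

lemma abs_integral_mul_sub_le {g : α → ℝ} {M η δ : ℝ} (hg : 0 ≤ g) (hgi : Integrable g μ)
    (hmass : ∫ x, g x ∂μ = M) (hfm : AEStronglyMeasurable f μ) (hK : ∀ x, |f x| ≤ K)
    (hδ : 0 < δ) (hη : ∀ x ∈ ball x₀ δ, |f x - f x₀| ≤ η) :
    |∫ x, f x * g x ∂μ - M * f x₀| ≤ η * M + 2 * K * ∫ x in (ball x₀ δ)ᶜ, g x ∂μ := by
  have hS : MeasurableSet (ball x₀ δ)ᶜ := measurableSet_ball.compl
  have hη0 : 0 ≤ η := (abs_nonneg _).trans (hη x₀ (mem_ball_self hδ))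
  have hpt : ∀ x,
      |f x - f x₀| * g x ≤ η * g x + (ball x₀ δ)ᶜ.indicator (fun x => 2 * K * g x) x := by
    intro x
    by_cases hx : x ∈ ball x₀ δ
    · rw [indicator_of_notMem (not_not_intro hx), add_zero]
      exact mul_le_mul_of_nonneg_right (hη x hx) (hg x)
    · rw [indicator_of_mem hx, ← add_mul]
      refine mul_le_mul_of_nonneg_right ?_ (hg x)
      linarith [abs_sub (f x) (f x₀), hK x, hK x₀]
  have hfg : Integrable (fun x => f x * g x) μ :=
    hgi.bdd_mul hfm (Eventually.of_forall fun x => (Real.norm_eq_abs _).trans_le (hK x))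
  calc |∫ x, f x * g x ∂μ - M * f x₀|
      = |∫ x, (f x - f x₀) * g x ∂μ| := by
        simp_rw [sub_mul]
        rw [integral_sub hfg (hgi.const_mul _), integral_const_mul, hmass, mul_comm]
    _ ≤ ∫ x, |f x - f x₀| * g x ∂μ := by
        refine abs_integral_le_integral_abs.trans_eq (integral_congr_ae ?_)
        filter_upwards with x
        rw [abs_mul, abs_of_nonneg (hg x)]
    _ ≤ ∫ x, (η * g x + (ball x₀ δ)ᶜ.indicator (fun x => 2 * K * g x) x) ∂μ :=
        integral_mono_of_nonneg (Eventually.of_forall fun x => mul_nonneg (abs_nonneg _) (hg x))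
          ((hgi.const_mul η).add ((hgi.const_mul _).indicator hS)) (Eventually.of_forall hpt)
    _ = η * M + 2 * K * ∫ x in (ball x₀ δ)ᶜ, g x ∂μ := by
        rw [integral_add (hgi.const_mul η) ((hgi.const_mul _).indicator hS), integral_const_mul,
          hmass, integral_indicator hS, integral_const_mul]

theorem tendsto_integral_mul_of_tendsto_setIntegral_compl_ball {l : Filter ι}
    {g : ι → α → ℝ} {M : ℝ} (hg : ∀ᶠ i in l, 0 ≤ g i ∧ Integrable (g i) μ ∧ ∫ x, g i x ∂μ = M)
    (htail : ∀ δ > 0, Tendsto (fun i => ∫ x in (ball x₀ δ)ᶜ, g i x ∂μ) l (𝓝 0))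
    (hfm : AEStronglyMeasurable f μ) (hf : ContinuousAt f x₀) (hK : ∀ x, |f x| ≤ K) :
    Tendsto (fun i => ∫ x, f x * g i x ∂μ) l (𝓝 (M * f x₀)) := by
  refine Metric.tendsto_nhds.2 fun ε hε => ?_
  set η := ε / (|M| + 1)
  have hηM : η * M < ε := calc
    η * M ≤ η * |M| := mul_le_mul_of_nonneg_left (le_abs_self M) (by positivity)
    _ < η * (|M| + 1) := by gcongr; exact lt_add_one _
    _ = ε := div_mul_cancel₀ ε (by positivity)
  obtain ⟨δ, hδ, hfδ⟩ := Metric.continuousAt_iff.1 hf η (by positivity)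
  have hbound : Tendsto (fun i => η * M + 2 * K * ∫ x in (ball x₀ δ)ᶜ, g i x ∂μ) l
      (𝓝 (η * M)) := by
    simpa using ((htail δ hδ).const_mul (2 * K)).const_add (η * M)
  filter_upwards [hg, hbound.eventually_lt_const hηM] with i ⟨hg0, hgi, hmass⟩ hi
  rw [Real.dist_eq]
  refine (abs_integral_mul_sub_le hg0 hgi hmass hfm hK hδ fun x hx => ?_).trans_lt hi
  exact (Real.dist_eq _ _ ▸ hfδ hx).le

end Concentration

section Barenblatt

variable {N : ℕ} {m C t : ℝ}

lemma fdeK_pos (hm : m ∈ Ioo 0 1) (hd : 0 < 2 - N * (1 - m)) : 0 < fdeK N m := by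
  have : 0 < 1 - m := sub_pos.2 hm.2
  have := hm.1
  unfold fdeK fdeBeta
  positivity

lemma fdeBarenblatt_nonneg (hk : 0 ≤ fdeK N m) (hC : 0 ≤ C) (ht : 0 < t)
    (x : EuclideanSpace ℝ (Fin N)) : 0 ≤ fdeBarenblatt N m C x t :=
  mul_nonneg (rpow_nonneg ht.le _) (rpow_nonneg (by positivity) _)

lemma fdeBarenblatt_le (hm : m ∈ Ioo 0 1) (hd : 0 < 2 - N * (1 - m)) (hC : 0 ≤ C) (ht : 0 < t)
    {x : EuclideanSpace ℝ (Fin N)} (hx : x ≠ 0) :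
    fdeBarenblatt N m C x t ≤
      (t / fdeK N m) ^ (1 / (1 - m)) * ‖x‖ ^ (-(2 * (1 / (1 - m)))) := by
  set p := 1 / (1 - m)
  set k := fdeK N m
  have hk : 0 < k := fdeK_pos hm hd
  have hp : 0 ≤ p := by have := hm.2; unfold p; positivity
  have hx' : 0 < ‖x‖ := norm_pos_iff.2 hx
  have htβ : 0 < t ^ (-(2 * fdeBeta N m)) := rpow_pos_of_pos ht _
  have hexp : -fdeAlpha N m + 2 * fdeBeta N m * p = p := by
    have : 1 - m ≠ 0 := (sub_pos.2 hm.2).ne'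
    unfold fdeAlpha fdeBeta p
    field_simp
    ring
  calc fdeBarenblatt N m C x t
      ≤ t ^ (-fdeAlpha N m) * (k * ‖x‖ ^ 2 * t ^ (-(2 * fdeBeta N m))) ^ (-p) := by
        refine mul_le_mul_of_nonneg_left ?_ (rpow_nonneg ht.le _)
        exact rpow_le_rpow_of_nonpos (by positivity) (by linarith) (neg_nonpos.2 hp)
    _ = (t ^ (-fdeAlpha N m) * t ^ (2 * fdeBeta N m * p)) * k ^ (-p) * ‖x‖ ^ (-(2 * p)) := by
        rw [mul_rpow (by positivity) htβ.le, mul_rpow hk.le (by positivity), ← rpow_mul ht.le,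
          ← rpow_natCast, ← rpow_mul hx'.le]
        ring_nf
    _ = (t / k) ^ p * ‖x‖ ^ (-(2 * p)) := by
        rw [← rpow_add ht, hexp, div_rpow ht.le hk.le, rpow_neg hk.le, div_eq_mul_inv]

lemma setIntegral_compl_ball_fdeBarenblatt_le (hN : 1 ≤ N) (hm : m ∈ Ioo 0 1)
    (hd : 0 < 2 - N * (1 - m)) (hC : 0 ≤ C) (ht : 0 < t) {δ : ℝ} (hδ : 0 < δ) :
    ∫ x in (ball (0 : EuclideanSpace ℝ (Fin N)) δ)ᶜ, fdeBarenblatt N m C x t ≤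
      (t / fdeK N m) ^ (1 / (1 - m)) * (N * volume.real (ball (0 : EuclideanSpace ℝ (Fin N)) 1) *
        (δ ^ ((N : ℝ) - 2 * (1 / (1 - m))) / (2 * (1 / (1 - m)) - N))) := by
  have : Nonempty (Fin N) := ⟨⟨0, hN⟩⟩
  have hq : (finrank ℝ (EuclideanSpace ℝ (Fin N)) : ℝ) < 2 * (1 / (1 - m)) := by
    have := sub_pos.2 hm.2
    rw [finrank_euclideanSpace_fin, mul_one_div, lt_div_iff₀ this]
    linarith
  have hint := integrableOn_compl_ball_norm_rpow_neg volume hδ hq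
  have hradial := setIntegral_compl_ball_norm_rpow_neg volume hδ hq
  rw [finrank_euclideanSpace_fin] at hradial
  rw [← hradial, ← integral_const_mul]
  refine integral_mono_of_nonneg (Eventually.of_forall fun x => ?_) (hint.const_mul _) ?_
  · exact fdeBarenblatt_nonneg (fdeK_pos hm hd).le hC ht x
  · filter_upwards [ae_restrict_mem measurableSet_ball.compl] with x hx
    refine fdeBarenblatt_le hm hd hC ht ?_
    rintro rfl
    exact hx (mem_ball_self hδ)

end Barenblatt

def fdeCriticalExp (N : ℕ) : ℝ := ((N : ℝ) - 2) / N

section Critical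

variable {N : ℕ} {m t : ℝ}

lemma fdeCriticalExp_lt_one (N : ℕ) : fdeCriticalExp N < 1 := by
  unfold fdeCriticalExp
  rcases Nat.eq_zero_or_pos N with rfl | hN
  · simp
  · rw [div_lt_one (by exact_mod_cast hN)]
    linarith

lemma two_sub_mul_one_sub_eq (hN : N ≠ 0) : 2 - N * (1 - m) = N * (m - fdeCriticalExp N) := by
  unfold fdeCriticalExp
  field_simp
  ring

lemma eventually_nhdsGT_fdeCriticalExp (hN : 2 ≤ N) :
    ∀ᶠ m : ℝ in 𝓝[>] fdeCriticalExp N, m ∈ Ioo 0 1 ∧ 0 < 2 - N * (1 - m) := by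
  filter_upwards [Ioo_mem_nhdsGT (fdeCriticalExp_lt_one N)] with m hm
  have hN' : (2 : ℝ) ≤ N := by exact_mod_cast hN
  have h0 : 0 ≤ fdeCriticalExp N := div_nonneg (by linarith) (by linarith)
  refine ⟨⟨h0.trans_lt hm.1, hm.2⟩, ?_⟩
  rw [two_sub_mul_one_sub_eq (by omega)]
  exact mul_pos (by linarith) (sub_pos.2 hm.1)

lemma div_fdeK_eq (hN : N ≠ 0) (hm : m ≠ 0) (hm1 : 1 - m ≠ 0) :
    t / fdeK N m = 2 * m * N * t / (1 - m) * (m - fdeCriticalExp N) := by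
  unfold fdeK fdeBeta
  rw [two_sub_mul_one_sub_eq hN]
  field_simp

lemma tendsto_one_div_one_sub_nhdsGT_fdeCriticalExp (hN : N ≠ 0) :
    Tendsto (fun m : ℝ => 1 / (1 - m)) (𝓝[>] fdeCriticalExp N) (𝓝 ((N : ℝ) / 2)) := by
  have h : 1 - fdeCriticalExp N = 2 / N := by
    unfold fdeCriticalExp
    field_simp
    ring
  have hlim := ((continuous_const.sub continuous_id).tendsto (fdeCriticalExp N)).inv₀
    (h ▸ by positivity : (1 : ℝ) - fdeCriticalExp N ≠ 0)
  simpa [h] using hlim.mono_left nhdsWithin_le_nhds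

lemma tendsto_div_fdeK_nhdsGT_fdeCriticalExp (hN : 2 ≤ N) :
    Tendsto (fun m => t / fdeK N m) (𝓝[>] fdeCriticalExp N) (𝓝 0) := by
  have hc : ContinuousAt (fun m : ℝ => 2 * m * N * t / (1 - m) * (m - fdeCriticalExp N))
      (fdeCriticalExp N) := by
    fun_prop (disch := exact sub_ne_zero.2 (fdeCriticalExp_lt_one N).ne')
  have hlim := hc.tendsto.mono_left (nhdsWithin_le_nhds (s := Ioi (fdeCriticalExp N)))
  rw [sub_self, mul_zero] at hlim
  refine hlim.congr' ?_
  filter_upwards [eventually_nhdsGT_fdeCriticalExp hN] with m hm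
  exact (div_fdeK_eq (by omega) hm.1.1.ne' (sub_pos.2 hm.1.2).ne').symm

theorem tendsto_fdeBarenblatt_nhdsGT_fdeCriticalExp (hN : 2 ≤ N) {C : ℝ → ℝ}
    (hC : ∀ᶠ m in 𝓝[>] fdeCriticalExp N, 0 ≤ C m) (ht : 0 < t)
    {x : EuclideanSpace ℝ (Fin N)} (hx : x ≠ 0) :
    Tendsto (fun m => fdeBarenblatt N m (C m) x t) (𝓝[>] fdeCriticalExp N) (𝓝 0) := by
  have hp := tendsto_one_div_one_sub_nhdsGT_fdeCriticalExp (by omega : N ≠ 0)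
  have hN2 : (0 : ℝ) < N / 2 := by positivity
  have hbound : Tendsto (fun m => (t / fdeK N m) ^ (1 / (1 - m)) * ‖x‖ ^ (-(2 * (1 / (1 - m)))))
      (𝓝[>] fdeCriticalExp N) (𝓝 0) := by
    simpa [zero_rpow hN2.ne'] using ((tendsto_div_fdeK_nhdsGT_fdeCriticalExp hN).rpow hp
      (Or.inr hN2)).mul (tendsto_const_nhds.rpow (hp.const_mul 2).neg
        (Or.inl (norm_ne_zero_iff.2 hx)))
  refine squeeze_zero' ?_ ?_ hbound <;>
    filter_upwards [eventually_nhdsGT_fdeCriticalExp hN, hC] with m hm hCm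
  · exact fdeBarenblatt_nonneg (fdeK_pos hm.1 hm.2).le hCm ht x
  · exact fdeBarenblatt_le hm.1 hm.2 hCm ht hx

lemma tendsto_fdeBarenblatt_tail_bound (hN : 3 ≤ N) (ht : 0 ≤ t) (c : ℝ) {δ : ℝ} (hδ : 0 < δ) :
    Tendsto (fun m => (t / fdeK N m) ^ (1 / (1 - m)) *
        (c * (δ ^ ((N : ℝ) - 2 * (1 / (1 - m))) / (2 * (1 / (1 - m)) - N))))
      (𝓝[>] fdeCriticalExp N) (𝓝 0) := by
  set mc := fdeCriticalExp N
  have hN' : (3 : ℝ) ≤ N := by exact_mod_cast hN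
  have hp := tendsto_one_div_one_sub_nhdsGT_fdeCriticalExp (by omega : N ≠ 0)
  have ha : ContinuousAt (fun m : ℝ => 2 * m * N * t / (1 - m)) mc := by
    fun_prop (disch := exact sub_ne_zero.2 (fdeCriticalExp_lt_one N).ne')
  have hF : Tendsto (fun m => (2 * m * N * t / (1 - m)) ^ (1 / (1 - m)) *
      (c * δ ^ ((N : ℝ) - 2 * (1 / (1 - m))) * ((1 - m) / N))) (𝓝[>] mc)
      (𝓝 ((2 * mc * N * t / (1 - mc)) ^ ((N : ℝ) / 2) *
        (c * δ ^ ((N : ℝ) - 2 * (N / 2)) * ((1 - mc) / N)))) :=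
    ((ha.tendsto.mono_left nhdsWithin_le_nhds).rpow hp (Or.inr (by positivity))).mul
      (((tendsto_const_nhds.rpow (tendsto_const_nhds.sub (hp.const_mul 2))
        (Or.inl hδ.ne')).const_mul c).mul
          (((tendsto_id.mono_left nhdsWithin_le_nhds).const_sub 1).div_const _))
  -- `(t / k)^p / (2p - N)` carries `(m - m_c)^(p - 1)` with `p - 1 → N/2 - 1 > 0`
  have hs : Tendsto (fun m => (m - mc) ^ (1 / (1 - m) - 1)) (𝓝[>] mc) (𝓝 0) := by
    have h0 : Tendsto (fun m => m - mc) (𝓝[>] mc) (𝓝 0) := by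
      simpa using
        (tendsto_id.mono_left (nhdsWithin_le_nhds (a := mc) (s := Ioi mc))).sub_const mc
    simpa [zero_rpow (by linarith : (N : ℝ) / 2 - 1 ≠ 0)] using
      h0.rpow (hp.sub_const 1) (Or.inr (by linarith))
  have hlim := hF.mul hs
  rw [mul_zero] at hlim
  refine hlim.congr' ?_
  filter_upwards [eventually_nhdsGT_fdeCriticalExp (by omega), self_mem_nhdsWithin]
    with m ⟨⟨hm0, hm1⟩, _⟩ (hmc : mc < m)
  have h1m : 0 < 1 - m := sub_pos.2 hm1
  have hs0 : 0 < m - mc := sub_pos.2 hmc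
  have hq : 2 * (1 / (1 - m)) - N = N * (m - mc) / (1 - m) := by
    rw [← two_sub_mul_one_sub_eq (by omega)]
    field_simp
  rw [div_fdeK_eq (by omega) hm0.ne' h1m.ne', mul_rpow (by positivity) hs0.le, hq,
    rpow_sub_one hs0.ne']
  field_simp

theorem tendsto_setIntegral_compl_ball_fdeBarenblatt (hN : 3 ≤ N) {C : ℝ → ℝ}
    (hC : ∀ᶠ m in 𝓝[>] fdeCriticalExp N, 0 ≤ C m) (ht : 0 < t) {δ : ℝ} (hδ : 0 < δ) :
    Tendsto (fun m =>
        ∫ x in (ball (0 : EuclideanSpace ℝ (Fin N)) δ)ᶜ, fdeBarenblatt N m (C m) x t)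
      (𝓝[>] fdeCriticalExp N) (𝓝 0) := by
  refine squeeze_zero' ?_ ?_ (tendsto_fdeBarenblatt_tail_bound hN ht.le
    (N * volume.real (ball (0 : EuclideanSpace ℝ (Fin N)) 1)) hδ) <;>
    filter_upwards [eventually_nhdsGT_fdeCriticalExp (by omega), hC] with m hm hCm
  · exact setIntegral_nonneg measurableSet_ball.compl fun x _ =>
      fdeBarenblatt_nonneg (fdeK_pos hm.1 hm.2).le hCm ht x
  · exact setIntegral_compl_ball_fdeBarenblatt_le (by omega) hm.1 hm.2 hCm ht hδ

end Critical

/-- Disappearance of the fundamental solution of the fast diffusion equation at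
the critical exponent `m_c = (N-2)/N`, `N ≥ 3`: if the Barenblatt solutions
`B_m(·,t)` all have mass `M`, then as `m → m_c⁺` they converge to `0` pointwise
away from the origin and, in the weak-* sense against bounded continuous
functions, to the Dirac mass `M δ₀`. -/
theorem fde_barenblatt_to_dirac (N : ℕ) (hN : 3 ≤ N)
    (mc : ℝ) (hmc : mc = ((N : ℝ) - 2) / N)
    (M t : ℝ) (hM : 0 < M) (ht : 0 < t)
    (C : ℝ → ℝ) (hCpos : ∀ m, mc < m → m < 1 → 0 < C m)
    (hmass : ∀ m, mc < m → m < 1 →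
      ∫ x, fdeBarenblatt N m (C m) x t = M) :
    (∀ x : EuclideanSpace ℝ (Fin N), x ≠ 0 →
      Tendsto (fun m => fdeBarenblatt N m (C m) x t) (𝓝[>] mc) (𝓝 0)) ∧
    (∀ f : EuclideanSpace ℝ (Fin N) → ℝ, Continuous f → (∃ K, ∀ x, |f x| ≤ K) →
      Tendsto (fun m => ∫ x, f x * fdeBarenblatt N m (C m) x t)
        (𝓝[>] mc) (𝓝 (M * f 0))) := by
  obtain rfl : mc = fdeCriticalExp N := hmc
  have hIoo := Ioo_mem_nhdsGT (fdeCriticalExp_lt_one N)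
  have hC : ∀ᶠ m in 𝓝[>] fdeCriticalExp N, 0 ≤ C m := by
    filter_upwards [hIoo] with m hm using (hCpos m hm.1 hm.2).le
  refine ⟨fun x hx => tendsto_fdeBarenblatt_nhdsGT_fdeCriticalExp (by omega) hC ht hx,
    fun f hf ⟨K, hK⟩ => ?_⟩
  refine tendsto_integral_mul_of_tendsto_setIntegral_compl_ball ?_
    (fun δ hδ => tendsto_setIntegral_compl_ball_fdeBarenblatt hN hC ht hδ)
    hf.aestronglyMeasurable hf.continuousAt hK
  filter_upwards [hIoo, eventually_nhdsGT_fdeCriticalExp (by omega)] with m hm hm'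
  have hmassm := hmass m hm.1 hm.2
  exact ⟨fun x => fdeBarenblatt_nonneg (fdeK_pos hm'.1 hm'.2).le (hCpos m hm.1 hm.2).le ht x,
    .of_integral_ne_zero (hmassm ▸ hM.ne'), hmassm⟩
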